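/- arXiv:2412.21093 — 9 statements merged into one kernel-verified Lean document; each statement's English description precedes it below -/
import Mathlib

section
/- Fix constants κ > 0, ε > 0 and σ with 0 < σ < 1. For every ξ ∈ ℝ³ there exist λ ∈ ℂ and Ψ ∈ ℂ⁴ with Ψ ≠ 0 such that the Fourier–Laplace mode with data (λ, ξ, Ψ) solves the linearized RAV Euler equations; moreover, if ξ ≠ 0, then every λ ∈ ℂ for which some Ψ ≠ 0 yields a Fourier–Laplace mode solution satisfies λ ≠ 0. -/
/-! On a Fourier–Laplace mode `∂ₜ` acts as multiplication by `λ` and `∂ⱼ` as multiplication by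
`iξⱼ`, so the system becomes linear algebra for the amplitude `Ψ`. A shear mode (`Ψ⁰ = 0`, spatial
part orthogonal to `ξ`) solves it as soon as `ελ² + κλ + ε|ξ|² = 0`, which has a root in `ℂ`.
For `λ = 0` and `ξ ≠ 0`, pairing the momentum equations with `ξ` and using the divergence
equation forces `σ²|ξ|²Ψ⁰ = 0`, hence `Ψ⁰ = 0` and then `Ψ = 0`. -/

open Filter

/-- Partial derivative in the `i`-th coordinate of a complex-valued function on `ℝ⁴`
(coordinate `0` is time, coordinates `1,2,3` are space). -/
noncomputable def pd (i : Fin 4) (f : (Fin 4 → ℝ) → ℂ) (x : Fin 4 → ℝ) : ℂ :=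
  deriv (fun s : ℝ => f (Function.update x i s)) (x i)

/-- The linearized RAV Euler equations:
`∂ₜρ + κ(∂₁u¹+∂₂u²+∂₃u³) = 0` and
`κ·∂ₜuʲ + σ²·∂ⱼρ = ε·(−∂ₜₜ + ∂₁₁ + ∂₂₂ + ∂₃₃)uʲ` for `j = 1,2,3`. -/
def LinearizedRAV (κ ε σ : ℝ) (ρ : (Fin 4 → ℝ) → ℂ) (u : Fin 3 → (Fin 4 → ℝ) → ℂ) : Prop :=
  (∀ x, pd 0 ρ x + (κ : ℂ) * ∑ j : Fin 3, pd j.succ (u j) x = 0) ∧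
  (∀ j : Fin 3, ∀ x, (κ : ℂ) * pd 0 (u j) x + (σ : ℂ) ^ 2 * pd j.succ ρ x
      = (ε : ℂ) * (-(pd 0 (pd 0 (u j)) x) + ∑ k : Fin 3, pd k.succ (pd k.succ (u j)) x))

/-- The Fourier–Laplace mode with temporal frequency `lam`, wave vector `ξ`
and amplitude `c`: `c · exp(λ t + i ⟨ξ, x⟩)`. -/
noncomputable def FLmode (lam : ℂ) (ξ : Fin 3 → ℝ) (c : ℂ) : (Fin 4 → ℝ) → ℂ :=
  fun x => c * Complex.exp (lam * (x 0 : ℂ) + Complex.I * ∑ j : Fin 3, (ξ j : ℂ) * (x j.succ : ℂ))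

open Complex Matrix

lemma hasDerivAt_sum_mul_update {ι : Type*} [Fintype ι] [DecidableEq ι] (a : ι → ℂ)
    (x : ι → ℝ) (i : ι) (s : ℝ) :
    HasDerivAt (fun s : ℝ => ∑ k, a k * ((Function.update x i s k : ℝ) : ℂ)) (a i) s := by
  have hterm (k : ι) : HasDerivAt (fun s : ℝ => a k * ((Function.update x i s k : ℝ) : ℂ))
      (a k * ((Pi.single i 1 : ι → ℝ) k : ℂ)) s :=
    ((hasDerivAt_pi.1 (hasDerivAt_update x i s) k).ofReal_comp).const_mul (a k)
  refine (HasDerivAt.fun_sum fun k _ => hterm k).congr_deriv ?_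
  simp [Pi.single_apply, apply_ite]

lemma pd_mul_cexp_sum (a : Fin 4 → ℂ) (c : ℂ) (i : Fin 4) :
    pd i (fun x => c * cexp (∑ k, a k * (x k : ℂ)))
      = fun x => a i * (c * cexp (∑ k, a k * (x k : ℂ))) := by
  funext x
  have hd := ((hasDerivAt_sum_mul_update a x i (x i)).cexp).const_mul c
  rw [pd, hd.deriv, Function.update_eq_self]
  ring

noncomputable def FLfreq (lam : ℂ) (ξ : Fin 3 → ℝ) : Fin 4 → ℂ :=
  Fin.cons lam fun j => I * ξ j

lemma FLmode_eq_mul_cexp (lam : ℂ) (ξ : Fin 3 → ℝ) (c : ℂ) :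
    FLmode lam ξ c = fun x => c * cexp (∑ k, FLfreq lam ξ k * (x k : ℂ)) := by
  funext x
  simp only [FLmode, FLfreq, Fin.sum_univ_succ (n := 3), Fin.cons_zero, Fin.cons_succ,
    Finset.mul_sum, mul_assoc]

lemma pd_FLmode (lam : ℂ) (ξ : Fin 3 → ℝ) (c : ℂ) (i : Fin 4) :
    pd i (FLmode lam ξ c) = FLmode lam ξ (FLfreq lam ξ i * c) := by
  simp only [FLmode_eq_mul_cexp, pd_mul_cexp_sum, mul_assoc]

lemma FLmode_apply_eq_mul (lam : ℂ) (ξ : Fin 3 → ℝ) (c : ℂ) (x : Fin 4 → ℝ) :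
    FLmode lam ξ c x = c * FLmode lam ξ 1 x := by
  simp [FLmode]

lemma FLmode_one_apply_zero (lam : ℂ) (ξ : Fin 3 → ℝ) : FLmode lam ξ 1 0 = 1 := by
  simp [FLmode]

lemma linearizedRAV_FLmode_iff (κ ε σ : ℝ) (lam : ℂ) (ξ : Fin 3 → ℝ) (Ψ : Fin 4 → ℂ) :
    LinearizedRAV κ ε σ (FLmode lam ξ (Ψ 0)) (fun j => FLmode lam ξ (Ψ j.succ)) ↔
      lam * Ψ 0 + κ * I * ∑ j, ξ j * Ψ j.succ = 0 ∧
      ∀ j, (ε * lam ^ 2 + κ * lam + ε * (ξ ⬝ᵥ ξ : ℝ)) * Ψ j.succ + σ ^ 2 * I * ξ j * Ψ 0 = 0 := by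
  have hdiv : ∑ j : Fin 3, I * ξ j * Ψ j.succ = I * ∑ j, ξ j * Ψ j.succ := by
    simp only [Finset.mul_sum, mul_assoc]
  have hlap (c : ℂ) : ∑ k : Fin 3, I * ξ k * (I * ξ k * c) = -(ξ ⬝ᵥ ξ : ℝ) * c := by
    simp only [dotProduct, ofReal_sum, ofReal_mul, Finset.sum_mul, ← Finset.sum_neg_distrib]
    exact Finset.sum_congr rfl fun k _ => by linear_combination (ξ k : ℂ) ^ 2 * c * I_sq
  simp only [LinearizedRAV, pd_FLmode, FLfreq, Fin.cons_zero, Fin.cons_succ]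
  simp only [FLmode_apply_eq_mul _ _ (_ * _), ← Finset.sum_mul, hdiv, hlap]
  constructor
  · rintro ⟨hρ, hu⟩
    have hρ0 := hρ 0
    have hu0 := fun j => hu j 0
    simp only [FLmode_one_apply_zero, mul_one] at hρ0 hu0
    exact ⟨by linear_combination hρ0, fun j => by linear_combination hu0 j⟩
  · rintro ⟨hρ, hu⟩
    exact ⟨fun x => by linear_combination FLmode lam ξ 1 x * hρ,
      fun j x => by linear_combination FLmode lam ξ 1 x * hu j⟩

lemma linearizedRAV_shear_FLmode {κ ε σ : ℝ} {lam : ℂ} {ξ : Fin 3 → ℝ} {v : Fin 3 → ℂ}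
    (hlam : ε * (lam * lam) + κ * lam + ε * (ξ ⬝ᵥ ξ : ℝ) = 0) (hv : v ⬝ᵥ (ofReal ∘ ξ) = 0) :
    LinearizedRAV κ ε σ (FLmode lam ξ 0) (fun j => FLmode lam ξ (v j)) := by
  refine (linearizedRAV_FLmode_iff κ ε σ lam ξ (Fin.cons 0 v)).2 ⟨?_, fun j => ?_⟩
  · rw [dotProduct_comm] at hv
    simp only [dotProduct, Function.comp_apply] at hv
    simp [hv]
  · simp only [Fin.cons_zero, Fin.cons_succ]
    linear_combination v j * hlam

lemma eq_zero_of_linearizedRAV_stationary_FLmode {κ ε σ : ℝ} (hκ : κ ≠ 0) (hε : ε ≠ 0)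
    (hσ : σ ≠ 0) {ξ : Fin 3 → ℝ} (hξ : ξ ≠ 0) {Ψ : Fin 4 → ℂ}
    (h : LinearizedRAV κ ε σ (FLmode 0 ξ (Ψ 0)) (fun j => FLmode 0 ξ (Ψ j.succ))) : Ψ = 0 := by
  obtain ⟨hdiv, hmom⟩ := (linearizedRAV_FLmode_iff κ ε σ 0 ξ Ψ).1 h
  set N : ℂ := ((ξ ⬝ᵥ ξ : ℝ) : ℂ) with hN
  have hN0 : N ≠ 0 := by rw [hN]; exact_mod_cast dotProduct_self_eq_zero.not.2 hξ
  have hNsum : N = ∑ j, (ξ j : ℂ) * ξ j := by simp [hN, dotProduct]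
  have hmom' (j : Fin 3) : ε * N * Ψ j.succ + σ ^ 2 * I * ξ j * Ψ 0 = 0 := by
    linear_combination hmom j
  have hdiv' : ∑ j, (ξ j : ℂ) * Ψ j.succ = 0 := by simpa [hκ] using hdiv
  have hpair : σ ^ 2 * I * N * Ψ 0
      = ∑ j, ξ j * (ε * N * Ψ j.succ + σ ^ 2 * I * ξ j * Ψ 0) - ε * N * ∑ j, ξ j * Ψ j.succ := by
    nth_rw 1 [hNsum]
    simp only [Finset.mul_sum, Finset.sum_mul, ← Finset.sum_sub_distrib]
    exact Finset.sum_congr rfl fun j _ => by ring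
  have hρ : Ψ 0 = 0 := by
    simpa [hmom', hdiv', hσ, hN0] using hpair
  have hu (j : Fin 3) : Ψ j.succ = 0 := by
    simpa [hρ, hε, hN0] using hmom' j
  funext i
  exact Fin.cases hρ hu i

theorem existence_of_FL_modes_general (κ ε σ : ℝ) (hκ : 0 < κ) (hε : 0 < ε)
    (hσ0 : 0 < σ) :
    ∀ ξ : Fin 3 → ℝ,
      (∃ (lam : ℂ) (Ψ : Fin 4 → ℂ), Ψ ≠ 0 ∧
        LinearizedRAV κ ε σ (FLmode lam ξ (Ψ 0)) (fun j => FLmode lam ξ (Ψ j.succ))) ∧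
      (ξ ≠ 0 → ∀ (lam : ℂ) (Ψ : Fin 4 → ℂ), Ψ ≠ 0 →
        LinearizedRAV κ ε σ (FLmode lam ξ (Ψ 0)) (fun j => FLmode lam ξ (Ψ j.succ)) →
        lam ≠ 0) := by
  intro ξ
  refine ⟨?_, fun hξ lam Ψ hΨ h hlam => hΨ ?_⟩
  · obtain ⟨v, hv0, hv⟩ := exists_ne_zero_dotProduct_eq_zero (ofReal ∘ ξ)
    obtain ⟨lam, hlam⟩ := exists_quadratic_eq_zero (b := (κ : ℂ)) (c := ε * (ξ ⬝ᵥ ξ : ℝ))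
      (ofReal_ne_zero.2 hε.ne') (IsAlgClosed.exists_eq_mul_self _)
    refine ⟨lam, Fin.cons 0 v, fun h0 => hv0 ?_, linearizedRAV_shear_FLmode hlam hv⟩
    funext j
    simpa using congrFun h0 j.succ
  · subst hlam
    exact eq_zero_of_linearizedRAV_stationary_FLmode hκ.ne' hε.ne' hσ0.ne' hξ h

/-- For every `ξ ∈ ℝ³` there is a nontrivial Fourier–Laplace mode solution of the
linearized RAV Euler equations, and if `ξ ≠ 0`, any such mode has `λ ≠ 0`. -/
theorem existence_of_FL_modes (κ ε σ : ℝ) (hκ : 0 < κ) (hε : 0 < ε)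
    (hσ0 : 0 < σ) (hσ1 : σ < 1) :
    ∀ ξ : Fin 3 → ℝ,
      (∃ (lam : ℂ) (Ψ : Fin 4 → ℂ), Ψ ≠ 0 ∧
        LinearizedRAV κ ε σ (FLmode lam ξ (Ψ 0)) (fun j => FLmode lam ξ (Ψ j.succ))) ∧
      (ξ ≠ 0 → ∀ (lam : ℂ) (Ψ : Fin 4 → ℂ), Ψ ≠ 0 →
        LinearizedRAV κ ε σ (FLmode lam ξ (Ψ 0)) (fun j => FLmode lam ξ (Ψ j.succ)) →
        lam ≠ 0) :=
  existence_of_FL_modes_general κ ε σ hκ hε hσ0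
end

section
/- Let κ > 0, ε > 0, σ > 0 be real constants, λ ∈ ℂ and ξ ∈ ℝ, and set κ̃ = κ/ε. Let M be the 4×4 complex block-diagonal matrix M = diag(M₁, M₂) with M₁ = [[λ, iκξ], [iσ²ξ, κλ + ελ² + εξ²]] and M₂ = (κλ + ελ² + εξ²)·I₂. Then det M = ε³·(λ³ + κ̃λ² + ξ²λ + κ̃σ²ξ²)·(λ² + κ̃λ + ξ²)², and consequently there exists Ψ ∈ ℂ⁴ with Ψ ≠ 0 and M·Ψ = 0 if and only if (λ³ + κ̃λ² + ξ²λ + κ̃σ²ξ²)·(λ² + κ̃λ + ξ²) = 0. -/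
/-- The coefficient matrix of the Fourier–Laplace mode ansatz with wave vector `(ξ,0,0)`
for the linearized RAV Euler equations has the stated determinant, and admits a nontrivial
kernel vector iff the dispersion relation holds. -/
theorem dispersion_relation (κ ε σ : ℝ) (hκ : 0 < κ) (hε : 0 < ε) (hσ : 0 < σ)
    (lam : ℂ) (ξ : ℝ) :
    let κt : ℂ := (κ : ℂ) / (ε : ℂ)
    let d : ℂ := (κ : ℂ) * lam + (ε : ℂ) * lam ^ 2 + (ε : ℂ) * (ξ : ℂ) ^ 2
    let M : Matrix (Fin 4) (Fin 4) ℂ :=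
      !![lam, Complex.I * (κ : ℂ) * (ξ : ℂ), 0, 0;
         Complex.I * (σ : ℂ) ^ 2 * (ξ : ℂ), d, 0, 0;
         0, 0, d, 0;
         0, 0, 0, d]
    M.det = (ε : ℂ) ^ 3
        * (lam ^ 3 + κt * lam ^ 2 + (ξ : ℂ) ^ 2 * lam + κt * (σ : ℂ) ^ 2 * (ξ : ℂ) ^ 2)
        * (lam ^ 2 + κt * lam + (ξ : ℂ) ^ 2) ^ 2 ∧
      ((∃ Ψ : Fin 4 → ℂ, Ψ ≠ 0 ∧ M.mulVec Ψ = 0) ↔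
        (lam ^ 3 + κt * lam ^ 2 + (ξ : ℂ) ^ 2 * lam + κt * (σ : ℂ) ^ 2 * (ξ : ℂ) ^ 2)
          * (lam ^ 2 + κt * lam + (ξ : ℂ) ^ 2) = 0) := by
  intro κt d M
  have hεC : (ε : ℂ) ≠ 0 := Complex.ofReal_ne_zero.mpr hε.ne'
  have hdet0 : M.det = (lam * d + (κ : ℂ) * (σ : ℂ) ^ 2 * (ξ : ℂ) ^ 2) * d * d := by
    show Matrix.det !![lam, Complex.I * (κ : ℂ) * (ξ : ℂ), 0, 0;
         Complex.I * (σ : ℂ) ^ 2 * (ξ : ℂ), d, 0, 0;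
         0, 0, d, 0;
         0, 0, 0, d] = _
    simp [Matrix.det_succ_row_zero, Fin.sum_univ_succ, Fin.succAbove, Complex.I_sq]
    ring_nf
    simp [Complex.I_sq]
  have hdet : M.det = (ε : ℂ) ^ 3
      * (lam ^ 3 + κt * lam ^ 2 + (ξ : ℂ) ^ 2 * lam + κt * (σ : ℂ) ^ 2 * (ξ : ℂ) ^ 2)
      * (lam ^ 2 + κt * lam + (ξ : ℂ) ^ 2) ^ 2 := by
    rw [hdet0]
    show (lam * ((κ:ℂ) * lam + (ε:ℂ) * lam ^ 2 + (ε:ℂ) * (ξ:ℂ) ^ 2)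
        + (κ:ℂ) * (σ:ℂ) ^ 2 * (ξ:ℂ) ^ 2) * _ * _
      = (ε : ℂ) ^ 3 * (lam ^ 3 + (κ:ℂ)/(ε:ℂ) * lam ^ 2 + (ξ:ℂ) ^ 2 * lam
        + (κ:ℂ)/(ε:ℂ) * (σ:ℂ) ^ 2 * (ξ:ℂ) ^ 2)
      * (lam ^ 2 + (κ:ℂ)/(ε:ℂ) * lam + (ξ:ℂ) ^ 2) ^ 2
    field_simp
    ring
  refine ⟨hdet, ?_⟩
  rw [show (∃ Ψ : Fin 4 → ℂ, Ψ ≠ 0 ∧ M.mulVec Ψ = 0) ↔ M.det = 0 from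
    Matrix.exists_mulVec_eq_zero_iff, hdet]
  constructor
  · intro h
    rcases mul_eq_zero.mp h with h | h
    · rcases mul_eq_zero.mp h with h | h
      · exact absurd h (pow_ne_zero 3 hεC)
      · exact mul_eq_zero_of_left h _
    · exact mul_eq_zero_of_right _ (pow_eq_zero_iff (n := 2) two_ne_zero |>.mp h)
  · intro h
    rcases mul_eq_zero.mp h with h | h
    · rw [h]; ring
    · rw [h]; ring
end

section
/- Let κ̃ > 0, 0 < σ < 1 and ξ ∈ ℝ, and define D(λ) = (λ³ + κ̃·λ² + ξ²·λ + κ̃·σ²·ξ²)·(λ² + κ̃·λ + ξ²) for λ ∈ ℂ. Then: (a) there exists λ ∈ ℂ with D(λ) = 0; (b) if ξ ≠ 0, then every λ ∈ ℂ with D(λ) = 0 satisfies λ ≠ 0; (c) every λ ∈ ℂ with D(λ) = 0 and λ ≠ 0 satisfies Re(λ) < 0. -/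
lemma quad_neg (κt : ℝ) (hκt : 0 < κt) (ξ : ℝ) (lam : ℂ)
    (h : lam ^ 2 + (κt : ℂ) * lam + (ξ : ℂ) ^ 2 = 0) (hlam : lam ≠ 0) : lam.re < 0 := by
  have h1 := congrArg Complex.re h
  have h2 := congrArg Complex.im h
  simp [Complex.add_re, Complex.add_im, Complex.mul_re, Complex.mul_im, pow_succ, pow_zero] at h1 h2
  ring_nf at h1 h2
  set a := lam.re; set b := lam.im
  by_contra hna
  push_neg at hna
  rcases eq_or_ne b 0 with hb | hb
  · have ha : a ≠ 0 := fun h0 => hlam (Complex.ext h0 hb)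
    have ha' : 0 < a := lt_of_le_of_ne hna (Ne.symm ha)
    rw [hb] at h1
    nlinarith [sq_nonneg ξ, mul_pos ha' hκt]
  · have h3 : b * (a * 2 + κt) = 0 := by linear_combination h2
    rcases mul_eq_zero.mp h3 with h4 | h4
    · exact hb h4
    · nlinarith

lemma cubic_neg (κt σ : ℝ) (hκt : 0 < κt) (hσ0 : 0 < σ) (hσ1 : σ < 1) (ξ : ℝ) (lam : ℂ)
    (h : lam ^ 3 + (κt : ℂ) * lam ^ 2 + (ξ : ℂ) ^ 2 * lam + (κt : ℂ) * (σ : ℂ) ^ 2 * (ξ : ℂ) ^ 2 = 0)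
    (hlam : lam ≠ 0) : lam.re < 0 := by
  have h1 := congrArg Complex.re h
  have h2 := congrArg Complex.im h
  simp [Complex.add_re, Complex.add_im, Complex.mul_re, Complex.mul_im, pow_succ, pow_zero] at h1 h2
  ring_nf at h1 h2
  set a := lam.re; set b := lam.im
  by_contra hna
  push_neg at hna
  rcases eq_or_ne b 0 with hb | hb
  · have ha : a ≠ 0 := fun h0 => hlam (Complex.ext h0 hb)
    have ha' : 0 < a := lt_of_le_of_ne hna (Ne.symm ha)
    rw [hb] at h1
    ring_nf at h1
    nlinarith [sq_nonneg ξ, pow_pos ha' 3, mul_nonneg (sq_nonneg ξ) ha'.le,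
      mul_nonneg (mul_nonneg hκt.le (sq_nonneg σ)) (sq_nonneg ξ),
      mul_nonneg hκt.le (sq_nonneg a)]
  · have h3 : b * (a * κt * 2 + a ^ 2 * 3 + ξ ^ 2 - b ^ 2) = 0 := by linear_combination h2
    rcases mul_eq_zero.mp h3 with h4 | h4
    · exact hb h4
    · have hb2 : b ^ 2 = 3 * a ^ 2 + 2 * κt * a + ξ ^ 2 := by linarith
      have key : 8*a^3 + 8*κt*a^2 + 2*κt^2*a + 2*ξ^2*a + κt*ξ^2*(1-σ^2) = 0 := by
        linear_combination (-1) * h1 + (-(3*a+κt)) * hb2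
      have hbpos : 0 < b ^ 2 := by positivity
      have hσ2 : 0 < 1 - σ^2 := by nlinarith
      have hc : 0 < κt * (1 - σ^2) := mul_pos hκt hσ2
      nlinarith [mul_pos hbpos hc, pow_nonneg hna 3, mul_nonneg (sq_nonneg ξ) hna,
        mul_nonneg hκt.le (mul_nonneg hna hna),
        mul_nonneg (mul_nonneg (mul_nonneg hκt.le hκt.le) (sq_nonneg σ)) hna,
        mul_nonneg (mul_nonneg hκt.le (sq_nonneg σ)) (mul_nonneg hna hna)]

/-- Roots of the dispersion relation of the linearized RAV Euler equations:
(a) roots exist, (b) for `ξ ≠ 0` every root is nonzero, (c) every nonzero root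
has negative real part. -/
theorem dispersion_roots (κt σ : ℝ) (hκt : 0 < κt) (hσ0 : 0 < σ) (hσ1 : σ < 1) (ξ : ℝ) :
    let D : ℂ → ℂ := fun lam =>
      (lam ^ 3 + (κt : ℂ) * lam ^ 2 + (ξ : ℂ) ^ 2 * lam + (κt : ℂ) * (σ : ℂ) ^ 2 * (ξ : ℂ) ^ 2)
        * (lam ^ 2 + (κt : ℂ) * lam + (ξ : ℂ) ^ 2)
    (∃ lam : ℂ, D lam = 0) ∧
      (ξ ≠ 0 → ∀ lam : ℂ, D lam = 0 → lam ≠ 0) ∧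
      (∀ lam : ℂ, D lam = 0 → lam ≠ 0 → lam.re < 0) := by
  intro D
  refine ⟨?_, ?_, ?_⟩
  · -- existence: a root of the quadratic factor
    obtain ⟨z, hz⟩ := IsAlgClosed.exists_pow_nat_eq ((κt : ℂ)^2 - 4*(ξ:ℂ)^2) (n := 2) two_pos
    refine ⟨(-(κt:ℂ) + z) / 2, ?_⟩
    have hquad : ((-(κt:ℂ) + z) / 2) ^ 2 + (κt : ℂ) * ((-(κt:ℂ) + z) / 2) + (ξ : ℂ) ^ 2 = 0 := by
      linear_combination hz/4
    simp only [D]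
    rw [hquad, mul_zero]
  · -- nonzero roots for ξ ≠ 0
    intro hξ lam hD h0
    rw [h0] at hD
    simp only [D] at hD
    norm_num at hD
    rcases hD with (hD | hD) | hD
    · exact hκt.ne' hD
    · exact hσ0.ne' hD
    · exact hξ hD
  · -- negative real part
    intro lam hD hlam
    simp only [D] at hD
    rcases mul_eq_zero.mp hD with h | h
    · exact cubic_neg κt σ hκt hσ0 hσ1 ξ lam h hlam
    · exact quad_neg κt hκt ξ lam h hlam
end

section
/- Let κ̃ > 0, 0 < σ < 1 and ξ ∈ ℝ with ξ ≠ 0. Then every λ ∈ ℂ satisfying λ³ + κ̃·λ² + ξ²·λ + κ̃·σ²·ξ² = 0 has Re(λ) < 0. -/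
/-- Every root of the cubic factor `λ³ + κ̃λ² + ξ²λ + κ̃σ²ξ²` of the dispersion relation
of the linearized RAV Euler equations has negative real part, provided `ξ ≠ 0`. -/
theorem cubic_roots_decay (κt σ : ℝ) (hκt : 0 < κt) (hσ0 : 0 < σ) (hσ1 : σ < 1)
    (ξ : ℝ) (hξ : ξ ≠ 0) :
    ∀ lam : ℂ,
      lam ^ 3 + (κt : ℂ) * lam ^ 2 + (ξ : ℂ) ^ 2 * lam
          + (κt : ℂ) * (σ : ℂ) ^ 2 * (ξ : ℂ) ^ 2 = 0 →
      lam.re < 0 := by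
  intro lam h
  obtain ⟨hre, him⟩ := Complex.ext_iff.mp h
  simp only [Complex.add_re, Complex.add_im, Complex.mul_re, Complex.mul_im,
    Complex.ofReal_re, Complex.ofReal_im, Complex.zero_re, Complex.zero_im,
    pow_succ, pow_zero, one_mul] at hre him
  set x := lam.re with hx
  set y := lam.im with hy
  ring_nf at hre him
  have hξ2 : 0 < ξ ^ 2 := by positivity
  have hσ2 : 0 < 1 - σ ^ 2 := by nlinarith
  by_contra hc
  push_neg at hc
  rcases eq_or_ne y 0 with hy0 | hy0
  · rw [hy0] at hre
    nlinarith [mul_pos hκt hξ2, mul_pos (mul_pos hκt (mul_pos hσ0 hσ0)) hξ2,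
      mul_nonneg hc hc, mul_nonneg (mul_nonneg hc hc) hc, mul_nonneg (mul_nonneg hc hc) hκt.le]
  · have h2 : y * (y ^ 2 - (3 * x ^ 2 + 2 * κt * x + ξ ^ 2)) = 0 := by
      linear_combination -him
    have him' : y ^ 2 = 3 * x ^ 2 + 2 * κt * x + ξ ^ 2 := by
      rcases mul_eq_zero.mp h2 with h3 | h3
      · exact absurd h3 hy0
      · linarith
    have key : 8 * x ^ 3 + 8 * κt * x ^ 2 + 2 * (ξ ^ 2 + κt ^ 2) * x
        + κt * ξ ^ 2 * (1 - σ ^ 2) = 0 := by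
      linear_combination -hre - (3 * x + κt) * him'
    nlinarith [mul_pos (mul_pos hκt hξ2) hσ2, pow_nonneg hc 3, pow_nonneg hc 2,
      mul_nonneg (mul_nonneg hc hc) hκt.le, mul_nonneg hc hξ2.le,
      mul_nonneg hc (mul_pos hκt hκt).le]
end

section
/- Let s ∈ ℝ with s² ≠ 1, let p : ℝ → ℝ, and fix constants A⁰ = −s·T⁰⁰(ρ_R,p(ρ_R),u_R) + T⁰¹(ρ_R,p(ρ_R),u_R) and A¹ = −s·T⁰¹(ρ_R,p(ρ_R),u_R) + T¹¹(ρ_R,p(ρ_R),u_R) for given reals ρ_R, u_R. Let ρ, u : ℝ → ℝ with u differentiable and v(u(ζ)) ≠ s for all ζ, and set F⁰(ζ) = −s·T⁰⁰(ρ(ζ),p(ρ(ζ)),u(ζ)) + T⁰¹(ρ(ζ),p(ρ(ζ)),u(ζ)) and F¹(ζ) = −s·T⁰¹(ρ(ζ),p(ρ(ζ)),u(ζ)) + T¹¹(ρ(ζ),p(ρ(ζ)),u(ζ)). Then the following are equivalent: (i) for every ζ, the function ζ ↦ √(1+u(ζ)²) has derivative (F⁰(ζ) − A⁰)/(1−s²)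 at ζ and u has derivative (F¹(ζ) − A¹)/(1−s²) at ζ; (ii) for every ζ, ρ(ζ) = (v(u(ζ))·A¹ − A⁰)/(s − v(u(ζ))) and u has derivative (F¹(ζ) − A¹)/(1−s²) at ζ. -/
/-- Component `T⁰⁰` of the relativistic perfect-fluid energy–momentum tensor in one
spatial dimension with 4-velocity `(√(1+u²), u)`. -/
noncomputable def T00 (ρ P u : ℝ) : ℝ := (P + ρ) * (1 + u ^ 2) - P

/-- Component `T⁰¹` of the relativistic perfect-fluid energy–momentum tensor. -/
noncomputable def T01 (ρ P u : ℝ) : ℝ := (P + ρ) * u * Real.sqrt (1 + u ^ 2)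

/-- Component `T¹¹` of the relativistic perfect-fluid energy–momentum tensor. -/
noncomputable def T11 (ρ P u : ℝ) : ℝ := (P + ρ) * u ^ 2 + P

/-- The classical fluid velocity `v(u) = u/√(1+u²)`. -/
noncomputable def vel (u : ℝ) : ℝ := u / Real.sqrt (1 + u ^ 2)

/-!
Writing `γ = √(1+u²)`, the two flux components satisfy `F⁰ - v F¹ = (v - s) ρ`, because the
pressure terms cancel once `γ² = 1 + u²` is used. On the other hand the chain rule gives
`γ' = v u'`, so with `u' = (F¹ - A¹)/(1 - s²)` the first profile equation says exactly
`F⁰ - A⁰ = v (F¹ - A¹)`. Combining the two, this is a linear equation for `ρ` with coefficient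
`s - v ≠ 0`, whose solution is the density formula.
-/

-- The paper's `F⁰` and `F¹` as functions of the state `(ρ, P, u)`.
noncomputable def flux0 (s ρ P u : ℝ) : ℝ := -s * T00 ρ P u + T01 ρ P u

noncomputable def flux1 (s ρ P u : ℝ) : ℝ := -s * T01 ρ P u + T11 ρ P u

lemma flux0_sub_vel_mul_flux1 (s ρ P u : ℝ) :
    flux0 s ρ P u - vel u * flux1 s ρ P u = (vel u - s) * ρ := by
  have hγ_sq : Real.sqrt (1 + u ^ 2) ^ 2 = 1 + u ^ 2 := Real.sq_sqrt (by positivity)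
  unfold flux0 flux1 T00 T01 T11 vel
  field_simp
  linear_combination (P + ρ) * u * hγ_sq

lemma eq_density_iff_flux (s ρ P u A0 A1 : ℝ) (hv : vel u ≠ s) :
    ρ = (vel u * A1 - A0) / (s - vel u) ↔
      flux0 s ρ P u - A0 = vel u * (flux1 s ρ P u - A1) := by
  have hsv : s - vel u ≠ 0 := sub_ne_zero.mpr hv.symm
  have hflux := flux0_sub_vel_mul_flux1 s ρ P u
  rw [eq_div_iff hsv]
  constructor <;> intro h <;> linear_combination (-1 : ℝ) * h + hflux

lemma HasDerivAt.sqrt_one_add_sq {u : ℝ → ℝ} {u' ζ : ℝ} (h : HasDerivAt u u' ζ) :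
    HasDerivAt (fun z => Real.sqrt (1 + u z ^ 2)) (vel (u ζ) * u') ζ := by
  have hpos : 1 + u ζ ^ 2 ≠ 0 := by positivity
  convert ((h.fun_pow 2).const_add 1).sqrt hpos using 1
  unfold vel
  field_simp
  ring

lemma hasDerivAt_sqrt_one_add_sq_div_iff {u : ℝ → ℝ} {ζ a b c : ℝ}
    (h : HasDerivAt u (b / c) ζ) (hc : c ≠ 0) :
    HasDerivAt (fun z => Real.sqrt (1 + u z ^ 2)) (a / c) ζ ↔ a = vel (u ζ) * b := by
  have hγ := h.sqrt_one_add_sq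
  constructor
  · intro ha
    have := ha.unique hγ
    field_simp at this
    exact this
  · rintro rfl
    convert hγ using 1
    ring

theorem profile_system_reduction_general (s : ℝ) (hs : s ^ 2 ≠ 1) (p : ℝ → ℝ) (ρR uR : ℝ)
    (ρ u : ℝ → ℝ) (hv : ∀ ζ : ℝ, vel (u ζ) ≠ s) :
    let A0 : ℝ := -s * T00 ρR (p ρR) uR + T01 ρR (p ρR) uR
    let A1 : ℝ := -s * T01 ρR (p ρR) uR + T11 ρR (p ρR) uR
    let F0 : ℝ → ℝ := fun ζ =>
      -s * T00 (ρ ζ) (p (ρ ζ)) (u ζ) + T01 (ρ ζ) (p (ρ ζ)) (u ζ)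
    let F1 : ℝ → ℝ := fun ζ =>
      -s * T01 (ρ ζ) (p (ρ ζ)) (u ζ) + T11 (ρ ζ) (p (ρ ζ)) (u ζ)
    ((∀ ζ : ℝ,
        HasDerivAt (fun z => Real.sqrt (1 + u z ^ 2)) ((F0 ζ - A0) / (1 - s ^ 2)) ζ ∧
        HasDerivAt u ((F1 ζ - A1) / (1 - s ^ 2)) ζ) ↔
      (∀ ζ : ℝ,
        ρ ζ = (vel (u ζ) * A1 - A0) / (s - vel (u ζ)) ∧
        HasDerivAt u ((F1 ζ - A1) / (1 - s ^ 2)) ζ)) := by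
  intro A0 A1 F0 F1
  have hs1 : 1 - s ^ 2 ≠ 0 := sub_ne_zero.mpr (Ne.symm hs)
  refine forall_congr' fun ζ => and_congr_left fun hu' => ?_
  exact (hasDerivAt_sqrt_one_add_sq_div_iff hu' hs1).trans
    (eq_density_iff_flux s (ρ ζ) (p (ρ ζ)) (u ζ) A0 A1 (hv ζ)).symm

/-- The two-component travelling-wave profile equations for the RAV Euler equations with
shock speed `s` are equivalent to an explicit density formula together with a single
scalar ODE for `u`. -/
theorem profile_system_reduction (s : ℝ) (hs : s ^ 2 ≠ 1) (p : ℝ → ℝ) (ρR uR : ℝ)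
    (ρ u : ℝ → ℝ) (hu : Differentiable ℝ u) (hv : ∀ ζ : ℝ, vel (u ζ) ≠ s) :
    let A0 : ℝ := -s * T00 ρR (p ρR) uR + T01 ρR (p ρR) uR
    let A1 : ℝ := -s * T01 ρR (p ρR) uR + T11 ρR (p ρR) uR
    let F0 : ℝ → ℝ := fun ζ =>
      -s * T00 (ρ ζ) (p (ρ ζ)) (u ζ) + T01 (ρ ζ) (p (ρ ζ)) (u ζ)
    let F1 : ℝ → ℝ := fun ζ =>
      -s * T01 (ρ ζ) (p (ρ ζ)) (u ζ) + T11 (ρ ζ) (p (ρ ζ)) (u ζ)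
    ((∀ ζ : ℝ,
        HasDerivAt (fun z => Real.sqrt (1 + u z ^ 2)) ((F0 ζ - A0) / (1 - s ^ 2)) ζ ∧
        HasDerivAt u ((F1 ζ - A1) / (1 - s ^ 2)) ζ) ↔
      (∀ ζ : ℝ,
        ρ ζ = (vel (u ζ) * A1 - A0) / (s - vel (u ζ)) ∧
        HasDerivAt u ((F1 ζ - A1) / (1 - s ^ 2)) ζ)) :=
  profile_system_reduction_general s hs p ρR uR ρ u hv
end

section
/- Let p : ℝ → ℝ be differentiable at ρ_R with derivative σ² (σ ≥ 0), and let ρ_R, u_R be reals with u_R ≠ 0. Set A = T⁰¹(ρ_R,p(ρ_R),u_R), B = T¹¹(ρ_R,p(ρ_R),u_R), and for u ≠ 0 define ρ̂(u) = −B + A/v(u) and Φ(u) = T¹¹(ρ̂(u), p(ρ̂(u)), u) − B. Then ρ̂(u_R) = ρ_R and Φ is differentiable at u_R with derivative Φ′(u_R) = ((v(u_R)² − σ²)/v(u_R)²)·(p(ρ_R) + ρ_R)·u_R. -/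
/-! Along the profile, `ρ̂` is the density that keeps the flux `T⁰¹` equal to its value `A`
at the right state. Since `T⁰¹ = v·(T⁰⁰ + P)` and `T⁰⁰ + P − T¹¹ = ρ`, this gives `ρ̂(u_R) = ρ_R`;
since `v′ = (1+u²)^{-3/2}`, it gives `ρ̂′(u_R) = −(p(ρ_R) + ρ_R)/u_R`. The chain rule for
`T¹¹(ρ̂, p ∘ ρ̂, u)`, with `p′ = σ²`, then yields `Φ′(u_R)` after using `v² = u²/(1+u²)`. -/

theorem T01_eq_vel_mul (ρ P u : ℝ) : T01 ρ P u = vel u * (T00 ρ P u + P) := by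
  have hs : Real.sqrt (1 + u ^ 2) ^ 2 = 1 + u ^ 2 := Real.sq_sqrt (by positivity)
  have hs0 : Real.sqrt (1 + u ^ 2) ≠ 0 := Real.sqrt_ne_zero'.2 (by positivity)
  simp only [T01, T00, vel]
  field_simp
  linear_combination (P + ρ) * u * hs

theorem T00_add_sub_T11 (ρ P u : ℝ) : T00 ρ P u + P - T11 ρ P u = ρ := by
  simp only [T00, T11]
  ring

theorem vel_ne_zero {u : ℝ} (hu : u ≠ 0) : vel u ≠ 0 :=
  div_ne_zero hu (Real.sqrt_ne_zero'.2 (by positivity))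

theorem vel_sq (u : ℝ) : vel u ^ 2 = u ^ 2 / (1 + u ^ 2) := by
  rw [vel, div_pow, Real.sq_sqrt (by positivity)]

theorem hasDerivAt_vel (u : ℝ) : HasDerivAt vel (1 / Real.sqrt (1 + u ^ 2) ^ 3) u := by
  have hpos : 0 < 1 + u ^ 2 := by positivity
  have hs : Real.sqrt (1 + u ^ 2) ^ 2 = 1 + u ^ 2 := Real.sq_sqrt hpos.le
  have hs0 : Real.sqrt (1 + u ^ 2) ≠ 0 := (Real.sqrt_pos.2 hpos).ne'
  have hsqrt : HasDerivAt (fun x : ℝ => Real.sqrt (1 + x ^ 2))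
      (1 / (2 * Real.sqrt (1 + u ^ 2)) * (2 * u)) u :=
    (Real.hasDerivAt_sqrt hpos.ne').comp u (by simpa using (hasDerivAt_pow 2 u).const_add 1)
  refine ((hasDerivAt_id' u).fun_div hsqrt hs0).congr_deriv ?_
  field_simp
  linear_combination hs

theorem hasDerivAt_const_div_vel (c : ℝ) {u : ℝ} (hu : u ≠ 0) :
    HasDerivAt (fun x => c / vel x) (-c / (u ^ 2 * Real.sqrt (1 + u ^ 2))) u := by
  have hs0 : Real.sqrt (1 + u ^ 2) ≠ 0 := Real.sqrt_ne_zero'.2 (by positivity)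
  refine ((hasDerivAt_const u c).fun_div (hasDerivAt_vel u) (vel_ne_zero hu)).congr_deriv ?_
  simp only [vel]
  field_simp
  ring

theorem HasDerivAt.T11 {ρ P : ℝ → ℝ} {ρ' P' u : ℝ} (hρ : HasDerivAt ρ ρ' u)
    (hP : HasDerivAt P P' u) :
    HasDerivAt (fun x => T11 (ρ x) (P x) x) ((P' + ρ') * u ^ 2 + (P u + ρ u) * (2 * u) + P') u :=
  (((hP.fun_add hρ).fun_mul (hasDerivAt_pow 2 u)).fun_add hP).congr_deriv (by simp)

theorem derivative_of_profile_rhs_general (p : ℝ → ℝ) (σ ρR uR : ℝ)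
    (hp : HasDerivAt p (σ ^ 2) ρR) (huR : uR ≠ 0) :
    let A : ℝ := T01 ρR (p ρR) uR
    let B : ℝ := T11 ρR (p ρR) uR
    let ρhat : ℝ → ℝ := fun u => -B + A / vel u
    let Φ : ℝ → ℝ := fun u => T11 (ρhat u) (p (ρhat u)) u - B
    ρhat uR = ρR ∧
      HasDerivAt Φ (((vel uR) ^ 2 - σ ^ 2) / (vel uR) ^ 2 * (p ρR + ρR) * uR) uR := by
  intro A B ρhat Φ
  have hρhat : ρhat uR = ρR := by
    simp only [ρhat, A, B, T01_eq_vel_mul]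
    rw [mul_div_cancel_left₀ _ (vel_ne_zero huR)]
    linarith [T00_add_sub_T11 ρR (p ρR) uR]
  have hρhat' : HasDerivAt ρhat (-A / (uR ^ 2 * Real.sqrt (1 + uR ^ 2))) uR :=
    (hasDerivAt_const_div_vel A huR).const_add (-B)
  have hpρhat := (hρhat ▸ hp).comp uR hρhat'
  refine ⟨hρhat, ((hρhat'.T11 hpρhat).sub_const B).congr_deriv ?_⟩
  simp only [hρhat, vel_sq, A, T01, Function.comp]
  field_simp
  ring

/-- Derivative of the right-hand side `Φ` of the standing-shock profile ODE at the right
state: `Φ′(u_R) = ((v(u_R)² − σ²)/v(u_R)²)·(p(ρ_R) + ρ_R)·u_R`. -/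
theorem derivative_of_profile_rhs (p : ℝ → ℝ) (σ ρR uR : ℝ) (hσ : 0 ≤ σ)
    (hp : HasDerivAt p (σ ^ 2) ρR) (huR : uR ≠ 0) :
    let A : ℝ := T01 ρR (p ρR) uR
    let B : ℝ := T11 ρR (p ρR) uR
    let ρhat : ℝ → ℝ := fun u => -B + A / vel u
    let Φ : ℝ → ℝ := fun u => T11 (ρhat u) (p (ρhat u)) u - B
    ρhat uR = ρR ∧
      HasDerivAt Φ (((vel uR) ^ 2 - σ ^ 2) / (vel uR) ^ 2 * (p ρR + ρR) * uR) uR :=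
  derivative_of_profile_rhs_general p σ ρR uR hp huR
end

section
/- Let 0 < σ_L < 1, 0 < σ_R < 1, and let u_L, u_R be nonzero reals with v_L = u_L/√(1+u_L²) and v_R = u_R/√(1+u_R²). (a) If u_L > 0 and u_R > 0, then (v_R² − σ_R²)·u_R < 0 < (v_L² − σ_L²)·u_L if and only if λ₁(v_R,σ_R) < 0 < λ₁(v_L,σ_L) and 0 < λ₂(v_R,σ_R). (b) If u_L < 0 and u_R < 0, then (v_R² − σ_R²)·u_R < 0 < (v_L² − σ_L²)·u_L if and only if λ₂(v_R,σ_R) < 0 < λ₂(v_L,σ_L) and λ₁(v_L,σ_L) < 0. -/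
/-- The first characteristic speed `λ₁(v,σ) = (v−σ)/(1−vσ)` of the relativistic Euler
equations. -/
noncomputable def lam1 (v σ : ℝ) : ℝ := (v - σ) / (1 - v * σ)

/-- The second characteristic speed `λ₂(v,σ) = (v+σ)/(1+vσ)` of the relativistic Euler
equations. -/
noncomputable def lam2 (v σ : ℝ) : ℝ := (v + σ) / (1 + v * σ)

lemma vsq_lt_one (u : ℝ) : (u / Real.sqrt (1 + u ^ 2)) ^ 2 < 1 := by
  have h1 : (0:ℝ) < 1 + u ^ 2 := by positivity
  have hs : Real.sqrt (1 + u ^ 2) ^ 2 = 1 + u ^ 2 := Real.sq_sqrt h1.le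
  rw [div_pow, div_lt_one (by positivity), hs]
  linarith

set_option maxHeartbeats 1000000 in
/-- The stability inequalities `Φ′(u_R) < 0 < Φ′(u_L)` of the standing-shock profile ODE
are equivalent to the Lax admissibility conditions for 1-shocks (if `u_L, u_R > 0`)
resp. 2-shocks (if `u_L, u_R < 0`) with speed `0`. -/
theorem stability_iff_Lax (σL σR uL uR : ℝ)
    (hσL0 : 0 < σL) (hσL1 : σL < 1) (hσR0 : 0 < σR) (hσR1 : σR < 1)
    (huL : uL ≠ 0) (huR : uR ≠ 0) :
    let vL : ℝ := uL / Real.sqrt (1 + uL ^ 2)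
    let vR : ℝ := uR / Real.sqrt (1 + uR ^ 2)
    (0 < uL → 0 < uR →
      (((vR ^ 2 - σR ^ 2) * uR < 0 ∧ 0 < (vL ^ 2 - σL ^ 2) * uL) ↔
        (lam1 vR σR < 0 ∧ 0 < lam1 vL σL ∧ 0 < lam2 vR σR))) ∧
    (uL < 0 → uR < 0 →
      (((vR ^ 2 - σR ^ 2) * uR < 0 ∧ 0 < (vL ^ 2 - σL ^ 2) * uL) ↔
        (lam2 vR σR < 0 ∧ 0 < lam2 vL σL ∧ lam1 vL σL < 0))) := by
  intro vL vR
  have hsL : 0 < Real.sqrt (1 + uL ^ 2) := Real.sqrt_pos.2 (by positivity)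
  have hsR : 0 < Real.sqrt (1 + uR ^ 2) := Real.sqrt_pos.2 (by positivity)
  have hvL2 : vL ^ 2 < 1 := vsq_lt_one uL
  have hvR2 : vR ^ 2 < 1 := vsq_lt_one uR
  constructor
  · intro huL0 huR0
    have hvL : 0 < vL := div_pos huL0 hsL
    have hvR : 0 < vR := div_pos huR0 hsR
    have hvL1 : vL < 1 := (abs_lt.mp (Iff.mp (sq_lt_one_iff_abs_lt_one _) hvL2)).2
    have hvR1 : vR < 1 := (abs_lt.mp (Iff.mp (sq_lt_one_iff_abs_lt_one _) hvR2)).2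
    have hdL : 0 < 1 - vL * σL := by nlinarith
    have hdR : 0 < 1 - vR * σR := by nlinarith
    have hdR2 : 0 < 1 + vR * σR := by positivity
    constructor
    · rintro ⟨h1, h2⟩
      have hq1 : vR ^ 2 < σR ^ 2 := by
        by_contra h
        push_neg at h
        exact absurd (mul_nonneg (by linarith) huR0.le) (not_le.2 h1)
      have hq2 : σL ^ 2 < vL ^ 2 := by
        by_contra h
        push_neg at h
        have := mul_nonpos_of_nonpos_of_nonneg (show vL ^ 2 - σL ^ 2 ≤ 0 by linarith) huL0.le
        linarith
      refine ⟨?_, ?_, ?_⟩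
      · exact div_neg_of_neg_of_pos (by nlinarith) hdR
      · rw [lam1]
        apply div_pos _ hdL
        nlinarith
      · rw [lam2]
        apply div_pos _ hdR2
        linarith
    · rintro ⟨h1, h2, _⟩
      rw [lam1] at h1 h2
      have hn1 : vR - σR < 0 := by
        rcases div_neg_iff.mp h1 with ⟨_, h⟩ | ⟨h, _⟩ <;> linarith
      have hn2 : 0 < vL - σL := by
        rcases div_pos_iff.mp h2 with ⟨h, _⟩ | ⟨_, h⟩ <;> linarith
      constructor
      · exact mul_neg_of_neg_of_pos (by nlinarith) huR0
      · exact mul_pos (by nlinarith) huL0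
  · intro huL0 huR0
    have hvL : vL < 0 := div_neg_of_neg_of_pos huL0 hsL
    have hvR : vR < 0 := div_neg_of_neg_of_pos huR0 hsR
    have hvL1 : -1 < vL := (abs_lt.mp (Iff.mp (sq_lt_one_iff_abs_lt_one _) hvL2)).1
    have hvR1 : -1 < vR := (abs_lt.mp (Iff.mp (sq_lt_one_iff_abs_lt_one _) hvR2)).1
    have hdL : 0 < 1 + vL * σL := by nlinarith
    have hdR : 0 < 1 + vR * σR := by nlinarith
    have hdL2 : 0 < 1 - vL * σL := by nlinarith [mul_neg_of_neg_of_pos hvL hσL0]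
    constructor
    · rintro ⟨h1, h2⟩
      have hq1 : σR ^ 2 < vR ^ 2 := by
        by_contra h
        push_neg at h
        have := mul_nonneg (show (0:ℝ) ≤ σR ^ 2 - vR ^ 2 by linarith) (show (0:ℝ) ≤ -uR by linarith)
        nlinarith
      have hq2 : vL ^ 2 < σL ^ 2 := by
        by_contra h
        push_neg at h
        have := mul_nonpos_of_nonneg_of_nonpos (show (0:ℝ) ≤ vL ^ 2 - σL ^ 2 by linarith) huL0.le
        linarith
      refine ⟨?_, ?_, ?_⟩
      · refine div_neg_of_neg_of_pos ?_ hdR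
        by_contra h
        push_neg at h
        nlinarith [mul_nonneg (show (0:ℝ) ≤ σR - vR by linarith) h]
      · rw [lam2]
        apply div_pos _ hdL
        nlinarith
      · exact div_neg_of_neg_of_pos (by linarith) hdL2
    · rintro ⟨h1, h2, _⟩
      rw [lam2] at h1 h2
      have hn1 : vR + σR < 0 := by
        rcases div_neg_iff.mp h1 with ⟨_, h⟩ | ⟨h, _⟩ <;> linarith
      have hn2 : 0 < vL + σL := by
        rcases div_pos_iff.mp h2 with ⟨h, _⟩ | ⟨_, h⟩ <;> linarith
      constructor
      · exact mul_neg_of_pos_of_neg (by nlinarith) huR0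
      · exact mul_pos_of_neg_of_neg (by nlinarith) huL0
end

section
/- Let Φ : ℝ → ℝ be continuously differentiable, let u_L < u_R with Φ(u_L) = Φ(u_R) = 0 and Φ(u) > 0 for all u ∈ (u_L, u_R). Then for every u₀ ∈ (u_L, u_R) there exists a differentiable function u : ℝ → ℝ with u(0) = u₀, u′(ζ) = Φ(u(ζ)) for all ζ ∈ ℝ, u(ζ) ∈ (u_L, u_R) for all ζ, lim_{ζ→−∞} u(ζ) = u_L and lim_{ζ→+∞} u(ζ) = u_R. -/
open Filter Set Topology

/-!
The orbit is obtained by quadrature: the time map `F v = ∫_{u₀}^v dw / Φ(w)` is strictly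
increasing on `(u_L, u_R)`, and its inverse solves `u̇ = Φ(u)`. Since `Φ` is Lipschitz and
vanishes at both end points, `Φ(w) ≤ K (w - u_L)` and `Φ(w) ≤ K (u_R - w)`, so `F' = 1/Φ`
exceeds the derivatives of `K⁻¹ log (w - u_L)` and of `-K⁻¹ log (u_R - w)`. Comparing with
these, `F → -∞` at `u_L` and `F → +∞` at `u_R`: the time map is onto `ℝ`, so its inverse is
defined for all times and converges to the rest points.
-/

theorem hasDerivAt_integral_of_continuousOn {g : ℝ → ℝ} {s : Set ℝ} (hs : IsOpen s)
    [s.OrdConnected] (hg : ContinuousOn g s) {c v : ℝ} (hc : c ∈ s) (hv : v ∈ s) :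
    HasDerivAt (fun x => ∫ w in c..x, g w) (g v) v :=
  intervalIntegral.integral_hasDerivAt_right
    (hg.mono (OrdConnected.uIcc_subset ‹_› hc hv)).intervalIntegrable
    (hg.stronglyMeasurableAtFilter hs v hv) (hg.continuousAt (hs.mem_nhds hv))

theorem LipschitzOnWith.le_mul_abs_sub_of_eq_zero {f : ℝ → ℝ} {K : NNReal} {s : Set ℝ}
    (hf : LipschitzOnWith K f s) {a w : ℝ} (ha : a ∈ s) (hw : w ∈ s) (hfa : f a = 0) :
    f w ≤ K * |w - a| := by
  have := hf.dist_le_mul w hw a ha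
  rw [Real.dist_eq, Real.dist_eq, hfa, sub_zero] at this
  exact (le_abs_self _).trans this

theorem tendsto_nhdsGT_atBot_of_hasDerivAt_inv {f F : ℝ → ℝ} {a b K : ℝ} (hab : a < b)
    (hf : ∀ w ∈ Ioo a b, 0 < f w) (hfK : ∀ w ∈ Ioo a b, f w ≤ K * (w - a))
    (hF : ∀ w ∈ Ioo a b, HasDerivAt F (f w)⁻¹ w) : Tendsto F (𝓝[>] a) atBot := by
  obtain ⟨c, hc⟩ : (Ioo a b).Nonempty := nonempty_Ioo.2 hab
  have hK : 0 < K := pos_of_mul_pos_left ((hf c hc).trans_le (hfK c hc)) (sub_pos.2 hc.1).le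
  set G : ℝ → ℝ := fun w => K⁻¹ * Real.log (w - a)
  have hG : ∀ w ∈ Ioo a b, HasDerivAt G (K⁻¹ * (w - a)⁻¹) w := fun w hw =>
    (((hasDerivAt_id w).sub_const a).log (sub_pos.2 hw.1).ne').const_mul K⁻¹ |>.congr_deriv
      (by simp)
  have hmono : MonotoneOn (F - G) (Ioo a b) := by
    refine monotoneOn_of_hasDerivWithinAt_nonneg (f' := fun w => (f w)⁻¹ - K⁻¹ * (w - a)⁻¹)
      (convex_Ioo a b)
      (fun w hw => ((hF w hw).sub (hG w hw)).continuousAt.continuousWithinAt) ?_ ?_ <;>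
    rw [interior_Ioo]
    · exact fun w hw => ((hF w hw).sub (hG w hw)).hasDerivWithinAt
    · exact fun w hw => sub_nonneg.2 (mul_inv K _ ▸ inv_anti₀ (hf w hw) (hfK w hw))
  have hGa : Tendsto G (𝓝[>] a) atBot := by
    have hsub : Tendsto (· - a) (𝓝[>] a) (𝓝[>] 0) := tendsto_nhdsWithin_iff.2
      ⟨by simpa using (continuous_sub_right a).continuousWithinAt.tendsto (x := a) (s := Ioi a),
        eventually_nhdsWithin_of_forall fun w hw => mem_Ioi.2 (sub_pos.2 hw)⟩
    exact (Real.tendsto_log_nhdsGT_zero.comp hsub).const_mul_atBot (inv_pos.2 hK)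
  refine tendsto_atBot_mono' _ ?_ (tendsto_atBot_add_const_left _ (F c - G c) hGa)
  filter_upwards [Ioo_mem_nhdsGT hc.1] with w hw
  have := hmono ⟨hw.1, hw.2.trans hc.2⟩ hc hw.2.le
  simp only [Pi.sub_apply] at this
  linarith

theorem tendsto_nhdsLT_atTop_of_hasDerivAt_inv {f F : ℝ → ℝ} {a b K : ℝ} (hab : a < b)
    (hf : ∀ w ∈ Ioo a b, 0 < f w) (hfK : ∀ w ∈ Ioo a b, f w ≤ K * (b - w))
    (hF : ∀ w ∈ Ioo a b, HasDerivAt F (f w)⁻¹ w) : Tendsto F (𝓝[<] b) atTop := by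
  have hneg : ∀ {w}, w ∈ Ioo (-b) (-a) → -w ∈ Ioo a b := fun hw =>
    ⟨lt_neg_of_lt_neg hw.2, neg_lt_of_neg_lt hw.1⟩
  have := tendsto_nhdsGT_atBot_of_hasDerivAt_inv (f := fun w => f (-w)) (F := fun w => -F (-w))
    (K := K) (neg_lt_neg hab) (fun w hw => hf _ (hneg hw))
    (fun w hw => by simpa [sub_neg_eq_add, add_comm] using hfK _ (hneg hw))
    (fun w hw => ((hF _ (hneg hw)).comp w (hasDerivAt_neg w)).neg.congr_deriv (by ring))
  exact ((tendsto_neg_atBot_atTop.comp this).comp tendsto_neg_nhdsLT).congr fun w => by simp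

theorem exists_orderIso_Ioo_of_tendsto {F : ℝ → ℝ} {a b : ℝ} (hab : a < b)
    (hmono : StrictMonoOn F (Ioo a b)) (hcont : ContinuousOn F (Ioo a b))
    (hFa : Tendsto F (𝓝[>] a) atBot) (hFb : Tendsto F (𝓝[<] b) atTop) :
    ∃ e : Ioo a b ≃o ℝ, ∀ w, e w = F w := by
  have hsurj := hcont.surjOn_of_tendsto (nonempty_Ioo.2 hab)
    (hFa.comp ((tendsto_Ioo_atBot (f := id)).1 tendsto_id))
    (hFb.comp ((tendsto_Ioo_atTop (f := id)).1 tendsto_id))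
  refine ⟨StrictMono.orderIsoOfSurjective (fun w : Ioo a b => F w)
    (fun v w h => hmono v.2 w.2 h) fun y => ?_, fun w => rfl⟩
  obtain ⟨w, hw, rfl⟩ := hsurj (mem_univ y)
  exact ⟨⟨w, hw⟩, rfl⟩

theorem exists_ode_solution_of_timeMap {Φ F : ℝ → ℝ} {a b u0 : ℝ} (hu0 : u0 ∈ Ioo a b)
    (hΦ : ∀ w ∈ Ioo a b, 0 < Φ w) (hF : ∀ w ∈ Ioo a b, HasDerivAt F (Φ w)⁻¹ w)
    (hF0 : F u0 = 0) (hFa : Tendsto F (𝓝[>] a) atBot) (hFb : Tendsto F (𝓝[<] b) atTop) :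
    ∃ u : ℝ → ℝ, u 0 = u0 ∧ (∀ ζ, HasDerivAt u (Φ (u ζ)) ζ) ∧ (∀ ζ, u ζ ∈ Ioo a b) ∧
      Tendsto u atBot (𝓝 a) ∧ Tendsto u atTop (𝓝 b) := by
  have hcont : ContinuousOn F (Ioo a b) := fun w hw =>
    (hF w hw).continuousAt.continuousWithinAt
  have hmono : StrictMonoOn F (Ioo a b) := by
    refine strictMonoOn_of_hasDerivWithinAt_pos (f' := fun w => (Φ w)⁻¹) (convex_Ioo a b) hcont
      ?_ ?_ <;>
    rw [interior_Ioo]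
    · exact fun w hw => (hF w hw).hasDerivWithinAt
    · exact fun w hw => inv_pos.2 (hΦ w hw)
  obtain ⟨e, he⟩ := exists_orderIso_Ioo_of_tendsto (hu0.1.trans hu0.2) hmono hcont hFa hFb
  have hFe : ∀ ζ, F (e.symm ζ) = ζ := fun ζ => by rw [← he, e.apply_symm_apply]
  refine ⟨fun ζ => e.symm ζ, ?_, fun ζ => ?_, fun ζ => (e.symm ζ).2, ?_, ?_⟩
  · show (e.symm 0 : ℝ) = u0
    rw [← hF0, ← he ⟨u0, hu0⟩, e.symm_apply_apply]
  · exact ((hF _ (e.symm ζ).2).of_local_left_inverse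
      (continuous_subtype_val.comp e.symm.continuous).continuousAt
      (inv_pos.2 (hΦ _ (e.symm ζ).2)).ne' (Eventually.of_forall hFe)).congr_deriv (inv_inv _)
  · exact ((tendsto_Ioo_atBot (f := e.symm)).1 e.symm.tendsto_atBot).mono_right nhdsWithin_le_nhds
  · exact ((tendsto_Ioo_atTop (f := e.symm)).1 e.symm.tendsto_atTop).mono_right nhdsWithin_le_nhds

/-- The scalar profile ODE `u̇ = Φ(u)` with exactly the two rest points `u_L` (unstable)
and `u_R` (stable), and `Φ > 0` in between, admits through every intermediate initial
value a globally defined heteroclinic orbit from `u_L` to `u_R`. -/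
theorem heteroclinic_orbit_exists (Φ : ℝ → ℝ) (hΦ : ContDiff ℝ 1 Φ)
    (uL uR : ℝ) (hLR : uL < uR) (hL : Φ uL = 0) (hR : Φ uR = 0)
    (hpos : ∀ u ∈ Set.Ioo uL uR, 0 < Φ u) :
    ∀ u0 ∈ Set.Ioo uL uR, ∃ u : ℝ → ℝ,
      u 0 = u0 ∧
      (∀ ζ : ℝ, HasDerivAt u (Φ (u ζ)) ζ) ∧
      (∀ ζ : ℝ, u ζ ∈ Set.Ioo uL uR) ∧
      Tendsto u atBot (nhds uL) ∧
      Tendsto u atTop (nhds uR) := by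
  intro u0 hu0
  obtain ⟨K, hK⟩ := hΦ.contDiffOn.exists_lipschitzOnWith one_ne_zero (convex_Icc uL uR)
    isCompact_Icc
  have hΦL : ∀ w ∈ Ioo uL uR, Φ w ≤ K * (w - uL) := fun w hw => by
    simpa [abs_of_pos (sub_pos.2 hw.1)] using
      hK.le_mul_abs_sub_of_eq_zero (left_mem_Icc.2 hLR.le) (Ioo_subset_Icc_self hw) hL
  have hΦR : ∀ w ∈ Ioo uL uR, Φ w ≤ K * (uR - w) := fun w hw => by
    simpa [abs_sub_comm, abs_of_pos (sub_pos.2 hw.2)] using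
      hK.le_mul_abs_sub_of_eq_zero (right_mem_Icc.2 hLR.le) (Ioo_subset_Icc_self hw) hR
  have hF : ∀ w ∈ Ioo uL uR, HasDerivAt (fun v => ∫ x in u0..v, (Φ x)⁻¹) (Φ w)⁻¹ w :=
    fun w hw => hasDerivAt_integral_of_continuousOn isOpen_Ioo
      (hΦ.continuous.continuousOn.inv₀ fun x hx => (hpos x hx).ne') hu0 hw
  exact exists_ode_solution_of_timeMap hu0 hpos hF intervalIntegral.integral_same
    (tendsto_nhdsGT_atBot_of_hasDerivAt_inv hLR hpos hΦL hF)
    (tendsto_nhdsLT_atTop_of_hasDerivAt_inv hLR hpos hΦR hF)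
end

section
/- Let Φ : ℝ → ℝ be continuous, let a < b with Φ(u) ≠ 0 for all u ∈ (a, b), and suppose there exists a differentiable function u : ℝ → ℝ with u′(ζ) = Φ(u(ζ)) for all ζ, u(0) ∈ (a, b), lim_{ζ→−∞} u(ζ) = a and lim_{ζ→+∞} u(ζ) = b. Then Φ(w) > 0 for all w ∈ (a, b). Symmetrically, if instead lim_{ζ→−∞} u(ζ) = b and lim_{ζ→+∞} u(ζ) = a, then Φ(w) < 0 for all w ∈ (a, b). -/
/-!
If `Φ w < 0`, the level `w` is a barrier that an orbit of `u̇ = Φ(u)` can cross only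
downwards. An orbit coming from `a < w` is below `w` at some time, hence below `w` ever after,
so it cannot tend to `b > w`.
-/

open Filter Set

theorem le_of_hasDerivAt_of_deriv_neg_at_level {f f' : ℝ → ℝ} {c t₀ : ℝ}
    (hf : ∀ x, HasDerivAt f (f' x) x) (hc : ∀ x, f x = c → f' x < 0) (h₀ : f t₀ ≤ c) :
    ∀ t, t₀ ≤ t → f t ≤ c := fun _ ht =>
  image_le_of_deriv_right_lt_deriv_boundary (B := fun _ => c) (B' := fun _ => 0)
    (fun x _ => (hf x).continuousAt.continuousWithinAt) (fun x _ => (hf x).hasDerivWithinAt)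
    h₀ (fun _ => hasDerivAt_const _ _) (fun x _ => hc x) ⟨ht, le_rfl⟩

theorem le_of_tendsto_atTop_of_hasDerivAt_autonomous {Φ u : ℝ → ℝ} {b c t₀ : ℝ}
    (hu : ∀ ζ, HasDerivAt u (Φ (u ζ)) ζ) (hc : Φ c < 0) (h₀ : u t₀ ≤ c)
    (hb : Tendsto u atTop (nhds b)) : b ≤ c :=
  le_of_tendsto hb <| eventually_atTop.2
    ⟨t₀, le_of_hasDerivAt_of_deriv_neg_at_level hu (fun _ hx => hx ▸ hc) h₀⟩

theorem pos_of_heteroclinic {Φ u : ℝ → ℝ} {a b w : ℝ}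
    (hu : ∀ ζ, HasDerivAt u (Φ (u ζ)) ζ) (hbot : Tendsto u atBot (nhds a))
    (htop : Tendsto u atTop (nhds b)) (hw : w ∈ Ioo a b) (hΦw : Φ w ≠ 0) : 0 < Φ w := by
  refine hΦw.lt_or_gt.resolve_left fun hneg => ?_
  obtain ⟨t₀, ht₀⟩ := (hbot.eventually (eventually_le_nhds hw.1)).exists
  exact hw.2.not_ge (le_of_tendsto_atTop_of_hasDerivAt_autonomous hu hneg ht₀ htop)

theorem sign_from_heteroclinic_general (Φ : ℝ → ℝ)
    (a b : ℝ) (hne : ∀ u ∈ Set.Ioo a b, Φ u ≠ 0) :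
    ((∃ u : ℝ → ℝ,
        (∀ ζ : ℝ, HasDerivAt u (Φ (u ζ)) ζ) ∧
        u 0 ∈ Set.Ioo a b ∧
        Tendsto u atBot (nhds a) ∧ Tendsto u atTop (nhds b)) →
      ∀ w ∈ Set.Ioo a b, 0 < Φ w) ∧
    ((∃ u : ℝ → ℝ,
        (∀ ζ : ℝ, HasDerivAt u (Φ (u ζ)) ζ) ∧
        u 0 ∈ Set.Ioo a b ∧
        Tendsto u atBot (nhds b) ∧ Tendsto u atTop (nhds a)) →
      ∀ w ∈ Set.Ioo a b, Φ w < 0) := by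
  refine ⟨fun ⟨u, hu, _, hbot, htop⟩ w hw => pos_of_heteroclinic hu hbot htop hw (hne w hw),
    fun ⟨u, hu, _, hbot, htop⟩ w hw => ?_⟩
  -- Reversing time turns the orbit from `b` to `a` of `Φ` into one from `a` to `b` of `-Φ`.
  have hv : ∀ ζ, HasDerivAt (fun ζ => u (-ζ)) (-Φ (u (-ζ))) ζ := fun ζ => by
    simpa [Function.comp_def] using (hu (-ζ)).comp ζ (hasDerivAt_neg ζ)
  exact neg_pos.1 <| pos_of_heteroclinic (Φ := fun x => -Φ x) hv
    (htop.comp tendsto_neg_atBot_atTop) (hbot.comp tendsto_neg_atTop_atBot) hw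
    (neg_ne_zero.2 (hne w hw))

/-- Converse ODE step: existence of a heteroclinic orbit of `u̇ = Φ(u)` connecting `a`
and `b` determines the sign of `Φ` on `(a,b)`: positive if the orbit runs from `a` to
`b`, negative if it runs from `b` to `a`. -/
theorem sign_from_heteroclinic (Φ : ℝ → ℝ) (hΦ : Continuous Φ)
    (a b : ℝ) (hab : a < b) (hne : ∀ u ∈ Set.Ioo a b, Φ u ≠ 0) :
    ((∃ u : ℝ → ℝ,
        (∀ ζ : ℝ, HasDerivAt u (Φ (u ζ)) ζ) ∧
        u 0 ∈ Set.Ioo a b ∧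
        Tendsto u atBot (nhds a) ∧ Tendsto u atTop (nhds b)) →
      ∀ w ∈ Set.Ioo a b, 0 < Φ w) ∧
    ((∃ u : ℝ → ℝ,
        (∀ ζ : ℝ, HasDerivAt u (Φ (u ζ)) ζ) ∧
        u 0 ∈ Set.Ioo a b ∧
        Tendsto u atBot (nhds b) ∧ Tendsto u atTop (nhds a)) →
      ∀ w ∈ Set.Ioo a b, Φ w < 0) :=
  sign_from_heteroclinic_general Φ a b hne
end
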